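/- (Zeng's identity) For all positive integers n, m and parameters x, z, q with all denominators nonzero: (q;q)_n/(zq;q)_n times the sum over chains n ≥ i_1 ≥ ... ≥ i_m ≥ 1 of x^{i_m} (zq;q)_{i_m}/(q;q)_{i_m} · ∏_{j=1}^m q^{i_j}/(1 - z q^{i_j}) equals the sum over r from 1 to n of [n choose r]_q · (x^r (x^{-1};q)_r + (-1)^{r-1} q^{binom(r,2)}) q^{m r}/(1 - z q^r)^m. -/

import Mathlib

/-!
Put `w_r = q^r / (1 - z q^r)`. Both sides have the shape `∑_r [n r]_q c_r w_r^m`, and we induct on `m`.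
For `m = 0` the left side is `x^n`, and so is the right side by the `q`-binomial theorem in Newton's
form, `y^n = ∑_r [n r]_q ∏_{i<r} (y - q^i)`, applied at `y = x` and at `y = 0`: the term
`(-1)^(r-1) q^binom(r,2)` is minus the product at `y = 0`. For the step `m → m + 1`, exchange the
outermost index `i_1` with `r` and sum over `i_1` by the telescoping identity
`∑_{i=r}^n q^i/(1 - z q^i) (zq;q)_i/(q;q)_i [i r]_q = w_r (zq;q)_n/(q;q)_n [n r]_q`.
-/

noncomputable def qPoch (q a : ℝ) (n : ℕ) : ℝ := ∏ j ∈ Finset.range n, (1 - a * q ^ j)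

noncomputable def qBinom (q : ℝ) (n r : ℕ) : ℝ :=
  if r ≤ n then qPoch q q n / (qPoch q q r * qPoch q q (n - r)) else 0

/-- Multiple sum over chains `top ≥ i₁ ≥ ⋯ ≥ i_m ≥ 1` of
`x^{i_m} (zq;q)_{i_m}/(q;q)_{i_m} ∏ q^{i_j}/(1 - z q^{i_j})`. -/
noncomputable def zSum (q z x : ℝ) : ℕ → ℕ → ℝ
  | 0, top => x ^ top * qPoch q (z * q) top / qPoch q q top
  | m + 1, top => ∑ i ∈ Finset.Icc 1 top, q ^ i / (1 - z * q ^ i) * zSum q z x m i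

open Finset

lemma qPoch_zero (q a : ℝ) : qPoch q a 0 = 1 := prod_range_zero _

lemma qPoch_succ (q a : ℝ) (n : ℕ) : qPoch q a (n + 1) = qPoch q a n * (1 - a * q ^ n) :=
  prod_range_succ _ _

lemma qPoch_mul_succ (q a : ℝ) (n : ℕ) :
    qPoch q (a * q) (n + 1) = qPoch q (a * q) n * (1 - a * q ^ (n + 1)) := by
  rw [qPoch_succ, pow_succ', mul_assoc]

lemma qPoch_self_succ (q : ℝ) (n : ℕ) : qPoch q q (n + 1) = qPoch q q n * (1 - q ^ (n + 1)) := by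
  rw [qPoch_succ, pow_succ']

lemma qPoch_mul_ne_zero {q a : ℝ} (ha : ∀ i, 1 ≤ i → 1 - a * q ^ i ≠ 0) (n : ℕ) :
    qPoch q (a * q) n ≠ 0 :=
  prod_ne_zero_iff.2 fun j _ => by
    simpa only [pow_succ', mul_assoc] using ha (j + 1) (Nat.le_add_left 1 j)

lemma qPoch_self_ne_zero {q : ℝ} (hq : ∀ i, 1 ≤ i → 1 - q ^ i ≠ 0) (n : ℕ) :
    qPoch q q n ≠ 0 := by
  simpa only [one_mul] using qPoch_mul_ne_zero (a := 1) (by simpa only [one_mul] using hq) n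

lemma pow_mul_qPoch_inv {x : ℝ} (hx : x ≠ 0) (q : ℝ) (r : ℕ) :
    x ^ r * qPoch q x⁻¹ r = ∏ i ∈ range r, (x - q ^ i) := by
  rw [qPoch, show x ^ r = ∏ _i ∈ range r, x by simp, ← prod_mul_distrib]
  exact prod_congr rfl fun i _ => by field_simp

lemma prod_range_neg_pow (q : ℝ) (r : ℕ) :
    ∏ i ∈ range r, -q ^ i = (-1) ^ r * q ^ (r * (r - 1) / 2) := by
  simp_rw [neg_eq_neg_one_mul (q ^ _)]
  rw [prod_mul_distrib, prod_const, card_range, prod_pow_eq_pow_sum, sum_range_id]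

lemma qBinom_add (q : ℝ) (r s : ℕ) :
    qBinom q (r + s) r = qPoch q q (r + s) / (qPoch q q r * qPoch q q s) := by
  rw [qBinom, if_pos (Nat.le_add_right r s), Nat.add_sub_cancel_left]

lemma qBinom_eq_zero_of_lt (q : ℝ) {n r : ℕ} (h : n < r) : qBinom q n r = 0 :=
  if_neg (Nat.not_le.2 h)

section

variable {q z : ℝ}

lemma qBinom_zero_right (hq : ∀ i, 1 ≤ i → 1 - q ^ i ≠ 0) (n : ℕ) : qBinom q n 0 = 1 := by
  simp [qBinom, qPoch_zero, qPoch_self_ne_zero hq n]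

lemma qBinom_self (hq : ∀ i, 1 ≤ i → 1 - q ^ i ≠ 0) (n : ℕ) : qBinom q n n = 1 := by
  simp [qBinom, qPoch_zero, qPoch_self_ne_zero hq n]

lemma qBinom_succ_succ (hq : ∀ i, 1 ≤ i → 1 - q ^ i ≠ 0) (n r : ℕ) :
    qBinom q (n + 1) (r + 1) = qBinom q n r + q ^ (r + 1) * qBinom q n (r + 1) := by
  rcases lt_trichotomy n r with h | rfl | h
  · rw [qBinom_eq_zero_of_lt q (by omega), qBinom_eq_zero_of_lt q h,
      qBinom_eq_zero_of_lt q (by omega)]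
    ring
  · rw [qBinom_self hq, qBinom_self hq, qBinom_eq_zero_of_lt q (Nat.lt_succ_self n)]
    ring
  · obtain ⟨s, rfl⟩ := Nat.exists_eq_add_of_lt h
    have h₁ := qBinom_add q (r + 1) (s + 1)
    have h₂ := qBinom_add q r (s + 1)
    rw [show r + 1 + (s + 1) = r + s + 1 + 1 by ring] at h₁
    rw [show r + (s + 1) = r + s + 1 by ring] at h₂
    rw [h₁, h₂, show r + s + 1 = r + 1 + s by ring, qBinom_add, qPoch_self_succ q (r + 1 + s),
      qPoch_self_succ q r, qPoch_self_succ q s]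
    have := qPoch_self_ne_zero hq
    have := hq (r + 1) (by omega)
    have := hq (s + 1) (by omega)
    field_simp
    ring

theorem pow_eq_sum_qBinom_mul_prod_sub (hq : ∀ i, 1 ≤ i → 1 - q ^ i ≠ 0) (y : ℝ) (n : ℕ) :
    y ^ n = ∑ r ∈ range (n + 1), qBinom q n r * ∏ i ∈ range r, (y - q ^ i) := by
  set P : ℕ → ℝ := fun r => ∏ i ∈ range r, (y - q ^ i)
  induction n with
  | zero => simp [qBinom_zero_right hq]
  | succ n ih =>
    have hshift : ∑ r ∈ range (n + 1), q ^ r * qBinom q n r * P r =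
        ∑ r ∈ range (n + 1), q ^ (r + 1) * qBinom q n (r + 1) * P (r + 1) + 1 := by
      rw [sum_range_succ', sum_range_succ (fun r => q ^ (r + 1) * qBinom q n (r + 1) * P (r + 1)),
        qBinom_eq_zero_of_lt q (Nat.lt_succ_self n)]
      simp [qBinom_zero_right hq, P]
    calc y ^ (n + 1)
        = ∑ r ∈ range (n + 1), (qBinom q n r * P (r + 1) + q ^ r * qBinom q n r * P r) := by
          rw [pow_succ, ih, sum_mul]
          exact sum_congr rfl fun r _ => by simp only [P, prod_range_succ]; ring
      _ = ∑ r ∈ range (n + 1), qBinom q (n + 1) (r + 1) * P (r + 1) + qBinom q (n + 1) 0 * P 0 := by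
          rw [sum_add_distrib, hshift]
          simp only [qBinom_succ_succ hq, qBinom_zero_right hq, add_mul, sum_add_distrib]
          simp [P, mul_assoc]
          ring
      _ = ∑ r ∈ range (n + 1 + 1), qBinom q (n + 1) r * P r := by
          rw [sum_range_succ' _ (n + 1)]

lemma sum_Icc_qBinom_mul_prod_sub (hq : ∀ i, 1 ≤ i → 1 - q ^ i ≠ 0) (y : ℝ) (n : ℕ) :
    ∑ r ∈ Icc 1 n, qBinom q n r * ∏ i ∈ range r, (y - q ^ i) = y ^ n - 1 := by
  rw [pow_eq_sum_qBinom_mul_prod_sub hq y n, Nat.range_succ_eq_Icc_zero,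
    ← insert_Icc_add_one_left_eq_Icc (Nat.zero_le n), sum_insert (by simp)]
  simp [qBinom_zero_right hq]

lemma sum_Icc_qBinom_mul_eq_pow (hq : ∀ i, 1 ≤ i → 1 - q ^ i ≠ 0) {x : ℝ} (hx : x ≠ 0)
    {n : ℕ} (hn : 0 < n) :
    ∑ r ∈ Icc 1 n, qBinom q n r *
      (x ^ r * qPoch q x⁻¹ r + (-1) ^ (r - 1) * q ^ (r * (r - 1) / 2)) = x ^ n := by
  have hterm : ∀ r ∈ Icc 1 n,
      qBinom q n r * (x ^ r * qPoch q x⁻¹ r + (-1) ^ (r - 1) * q ^ (r * (r - 1) / 2)) =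
        qBinom q n r * ∏ i ∈ range r, (x - q ^ i) - qBinom q n r * ∏ i ∈ range r, (0 - q ^ i) := by
    intro r hr
    obtain ⟨t, rfl⟩ := Nat.exists_eq_add_of_le' (mem_Icc.1 hr).1
    rw [pow_mul_qPoch_inv hx]
    simp only [zero_sub, prod_range_neg_pow, Nat.add_sub_cancel, pow_succ]
    ring
  rw [sum_congr rfl hterm, sum_sub_distrib, sum_Icc_qBinom_mul_prod_sub hq,
    sum_Icc_qBinom_mul_prod_sub hq, zero_pow hn.ne']
  ring

lemma sum_Icc_pow_div_mul_qPoch_div_mul_qBinom (hq : ∀ i, 1 ≤ i → 1 - q ^ i ≠ 0)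
    (hz : ∀ i, 1 ≤ i → 1 - z * q ^ i ≠ 0) {r n : ℕ} (hr : 1 ≤ r) (hrn : r ≤ n) :
    ∑ i ∈ Icc r n, q ^ i / (1 - z * q ^ i) * qPoch q (z * q) i / qPoch q q i * qBinom q i r =
      q ^ r / (1 - z * q ^ r) * qPoch q (z * q) n / qPoch q q n * qBinom q n r := by
  induction n, hrn using Nat.le_induction with
  | base => rw [Icc_self, sum_singleton]
  | succ n hrn ih =>
    obtain ⟨s, rfl⟩ := Nat.exists_eq_add_of_le hrn
    rw [sum_Icc_succ_top (by omega), ih, qPoch_mul_succ, qBinom_add,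
      show r + s + 1 = r + (s + 1) by ring, qBinom_add, qPoch_self_succ q s]
    have := qPoch_self_ne_zero hq r
    have := qPoch_self_ne_zero hq s
    have := qPoch_self_ne_zero hq (r + s)
    have := qPoch_self_ne_zero hq (r + (s + 1))
    have := hq (s + 1) (by omega)
    have := hz (r + (s + 1)) (by omega)
    have : 1 - q ^ r * z ≠ 0 := by rw [mul_comm]; exact hz r hr
    field_simp
    ring

lemma qPoch_div_mul_sum_Icc_nested_qBinom (hq : ∀ i, 1 ≤ i → 1 - q ^ i ≠ 0)
    (hz : ∀ i, 1 ≤ i → 1 - z * q ^ i ≠ 0) (A : ℕ → ℝ) (n : ℕ) :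
    qPoch q q n / qPoch q (z * q) n *
        ∑ i ∈ Icc 1 n, q ^ i / (1 - z * q ^ i) *
          (qPoch q (z * q) i / qPoch q q i * ∑ r ∈ Icc 1 i, qBinom q i r * A r) =
      ∑ r ∈ Icc 1 n, qBinom q n r * (A r * (q ^ r / (1 - z * q ^ r))) := by
  have hswap : ∑ i ∈ Icc 1 n, q ^ i / (1 - z * q ^ i) *
        (qPoch q (z * q) i / qPoch q q i * ∑ r ∈ Icc 1 i, qBinom q i r * A r) =
      ∑ r ∈ Icc 1 n, (∑ i ∈ Icc r n,
        q ^ i / (1 - z * q ^ i) * qPoch q (z * q) i / qPoch q q i * qBinom q i r) * A r := by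
    simp_rw [mul_sum, sum_mul]
    rw [sum_comm' (t' := Icc 1 n) (s' := fun r => Icc r n) (fun i r => by
      simp only [mem_Icc]; omega)]
    exact sum_congr rfl fun r _ => sum_congr rfl fun i _ => by ring
  rw [hswap, mul_sum]
  refine sum_congr rfl fun r hr => ?_
  obtain ⟨hr, hrn⟩ := mem_Icc.1 hr
  rw [sum_Icc_pow_div_mul_qPoch_div_mul_qBinom hq hz hr hrn]
  have := qPoch_self_ne_zero hq n
  have := qPoch_mul_ne_zero hz n
  have := hz r hr
  field_simp

lemma qPoch_div_mul_zSum (hq : ∀ i, 1 ≤ i → 1 - q ^ i ≠ 0)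
    (hz : ∀ i, 1 ≤ i → 1 - z * q ^ i ≠ 0) {x : ℝ} {c : ℕ → ℝ}
    (hc : ∀ n, 0 < n → ∑ r ∈ Icc 1 n, qBinom q n r * c r = x ^ n) (m : ℕ) {n : ℕ} (hn : 0 < n) :
    qPoch q q n / qPoch q (z * q) n * zSum q z x m n =
      ∑ r ∈ Icc 1 n, qBinom q n r * (c r * (q ^ r / (1 - z * q ^ r)) ^ m) := by
  induction m generalizing n with
  | zero =>
    simp only [zSum, pow_zero, mul_one, hc n hn]
    have := qPoch_self_ne_zero hq n
    have := qPoch_mul_ne_zero hz n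
    field_simp
  | succ m ih =>
    have hzSum : ∀ i ∈ Icc 1 n, zSum q z x m i = qPoch q (z * q) i / qPoch q q i *
        ∑ r ∈ Icc 1 i, qBinom q i r * (c r * (q ^ r / (1 - z * q ^ r)) ^ m) := by
      intro i hi
      rw [← ih (mem_Icc.1 hi).1]
      have := qPoch_self_ne_zero hq i
      have := qPoch_mul_ne_zero hz i
      field_simp
    rw [zSum, sum_congr rfl fun i hi => by rw [hzSum i hi],
      qPoch_div_mul_sum_Icc_nested_qBinom hq hz]
    simp only [pow_succ, mul_assoc]

end

theorem zeng_general (q z x : ℝ) (n m : ℕ) (hn : 0 < n) (hx : x ≠ 0)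
    (hden1 : ∀ i : ℕ, 1 ≤ i → 1 - q ^ i ≠ 0)
    (hden2 : ∀ i : ℕ, 1 ≤ i → 1 - z * q ^ i ≠ 0) :
    qPoch q q n / qPoch q (z * q) n * zSum q z x m n =
      ∑ r ∈ Finset.Icc 1 n,
        qBinom q n r * (x ^ r * qPoch q x⁻¹ r + (-1) ^ (r - 1) * q ^ (r * (r - 1) / 2)) *
          q ^ (m * r) / (1 - z * q ^ r) ^ m := by
  rw [qPoch_div_mul_zSum hden1 hden2 (fun n hn => sum_Icc_qBinom_mul_eq_pow hden1 hx hn) m hn]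
  refine sum_congr rfl fun r _ => ?_
  ring

/-- Zeng's identity. -/
theorem zeng (q z x : ℝ) (n m : ℕ) (hn : 0 < n) (hm : 0 < m) (hx : x ≠ 0)
    (hden1 : ∀ i : ℕ, 1 ≤ i → 1 - q ^ i ≠ 0)
    (hden2 : ∀ i : ℕ, 1 ≤ i → 1 - z * q ^ i ≠ 0) :
    qPoch q q n / qPoch q (z * q) n * zSum q z x m n =
      ∑ r ∈ Finset.Icc 1 n,
        qBinom q n r * (x ^ r * qPoch q x⁻¹ r + (-1) ^ (r - 1) * q ^ (r * (r - 1) / 2)) *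
          q ^ (m * r) / (1 - z * q ^ r) ^ m :=
  zeng_general q z x n m hn hx hden1 hden2
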